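/- arXiv:2207.11029 — 6 statements merged into one kernel-verified Lean document; each statement's English description precedes it below -/
import Mathlib

section
/- For every m ∈ ℕ with m ≥ 1, ∫_ℝ dx/(cosh x)^{2m+2} ≤ 2/√m. -/
open MeasureTheory Real Set

/-!
Substitute `t = tanh x`, so that `dt = dx / cosh² x` and `1 / cosh² x = 1 - t² ≤ exp (-t²)`.
Then `1 / cosh^(2m+2) x ≤ exp (-m t²) / cosh² x`, and the integral is at most the Gaussian
integral `∫ exp (-m t²) dt = √(π / m) ≤ 2 / √m`.
-/

theorem Real.hasDerivAt_tanh (x : ℝ) : HasDerivAt tanh (1 / cosh x ^ 2) x := by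
  have h := (hasDerivAt_sinh x).div (hasDerivAt_cosh x) (cosh_pos x).ne'
  rw [funext tanh_eq_sinh_div_cosh]
  refine h.congr_deriv ?_
  rw [div_eq_div_iff (by positivity) (by positivity)]
  nlinarith [cosh_sq_sub_sinh_sq x]

theorem Real.strictMono_tanh : StrictMono tanh :=
  strictMono_of_deriv_pos fun x => by rw [(hasDerivAt_tanh x).deriv]; positivity

theorem Real.one_div_cosh_sq_eq_one_sub_tanh_sq (x : ℝ) : 1 / cosh x ^ 2 = 1 - tanh x ^ 2 := by
  have hc : cosh x ≠ 0 := (cosh_pos x).ne'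
  rw [tanh_eq_sinh_div_cosh, div_pow, eq_sub_iff_add_eq, ← add_div,
    div_eq_one_iff_eq (pow_ne_zero 2 hc)]
  linarith [cosh_sq_sub_sinh_sq x]

theorem Real.one_div_cosh_sq_le_exp_neg_tanh_sq (x : ℝ) : 1 / cosh x ^ 2 ≤ exp (-tanh x ^ 2) := by
  rw [one_div_cosh_sq_eq_one_sub_tanh_sq]
  linarith [add_one_le_exp (-tanh x ^ 2)]

theorem Real.one_div_cosh_pow_le (m : ℕ) (x : ℝ) :
    1 / cosh x ^ (2 * m + 2) ≤ 1 / cosh x ^ 2 * exp (-m * tanh x ^ 2) := by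
  have hpow : 1 / cosh x ^ (2 * m + 2) = 1 / cosh x ^ 2 * (1 / cosh x ^ 2) ^ m := by
    rw [one_div_pow, ← pow_mul, one_div_mul_one_div, ← pow_add, add_comm]
  have hexp : exp (-m * tanh x ^ 2) = exp (-tanh x ^ 2) ^ m := by
    rw [← exp_nat_mul]; ring_nf
  rw [hpow, hexp]
  gcongr
  exact one_div_cosh_sq_le_exp_neg_tanh_sq x

section ChangeOfVariables

variable {f f' g : ℝ → ℝ}

theorem integrable_abs_deriv_mul_comp (hf : ∀ x, HasDerivAt f (f' x) x)
    (hinj : Function.Injective f) (hg : Integrable g) :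
    Integrable fun x => |f' x| * g (f x) := by
  have := (integrableOn_image_iff_integrableOn_abs_deriv_smul MeasurableSet.univ
    (fun x _ => (hf x).hasDerivWithinAt) hinj.injOn g).mp hg.integrableOn
  simpa only [integrableOn_univ, smul_eq_mul] using this

theorem integral_abs_deriv_mul_comp_le (hf : ∀ x, HasDerivAt f (f' x) x)
    (hinj : Function.Injective f) (hg : Integrable g) (hg0 : 0 ≤ g) :
    ∫ x, |f' x| * g (f x) ≤ ∫ t, g t := by
  have hsubst : ∫ t in f '' univ, g t = ∫ x, |f' x| * g (f x) := by
    rw [integral_image_eq_integral_abs_deriv_smul MeasurableSet.univ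
      (fun x _ => (hf x).hasDerivWithinAt) hinj.injOn g, Measure.restrict_univ]
    rfl
  rw [← hsubst]
  exact setIntegral_le_integral hg (ae_of_all _ hg0)

end ChangeOfVariables

theorem Real.sqrt_pi_div_le_two_div_sqrt (c : ℝ) : √(π / c) ≤ 2 / √c := by
  rw [sqrt_div pi_pos.le]
  have hπ : √π ≤ 2 := by
    rw [show (2 : ℝ) = √(2 ^ 2) by rw [sqrt_sq zero_le_two]]
    exact sqrt_le_sqrt (by linarith [pi_le_four])
  gcongr

theorem stmt_7 (m : ℕ) (hm : 1 ≤ m) :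
    (∫ x : ℝ, 1 / Real.cosh x ^ (2 * m + 2)) ≤ 2 / Real.sqrt m := by
  have hm0 : (0 : ℝ) < m := by exact_mod_cast hm
  have hgauss : Integrable fun t : ℝ => exp (-m * t ^ 2) := integrable_exp_neg_mul_sq hm0
  have hint := integrable_abs_deriv_mul_comp hasDerivAt_tanh strictMono_tanh.injective hgauss
  calc (∫ x : ℝ, 1 / cosh x ^ (2 * m + 2))
      ≤ ∫ x, |1 / cosh x ^ 2| * exp (-m * tanh x ^ 2) := by
        refine integral_mono_of_nonneg (ae_of_all _ fun x => by positivity) hint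
          (ae_of_all _ fun x => ?_)
        simpa only [abs_of_pos (by positivity : 0 < 1 / cosh x ^ 2)] using one_div_cosh_pow_le m x
    _ ≤ ∫ t, exp (-m * t ^ 2) :=
        integral_abs_deriv_mul_comp_le hasDerivAt_tanh strictMono_tanh.injective hgauss
          fun t => by positivity
    _ = √(π / m) := integral_gaussian m
    _ ≤ 2 / √m := sqrt_pi_div_le_two_div_sqrt m
end

section
/- The integral ∫_0^∞ ln(1 - 1/cosh(x)) dx equals -3π²/8. -/
/-!
With `t = exp (-x)` one has `1 - 1 / cosh x = (1 - t)² / (1 + t²) = (1 - t)² (1 - t²) / (1 - t⁴)`,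
so the integrand is `2 L₁ + L₂ - L₄` with `Lₐ x = log (1 - exp (-a x))`. Expanding
`-log (1 - s) = ∑ sⁿ⁺¹ / (n + 1)` and integrating term by term gives `∫₀^∞ Lₐ = -ζ(2) / a`,
hence the value `-(2 + 1/2 - 1/4) π² / 6 = -3π² / 8`.
-/

open MeasureTheory Real Set Filter

section SummableIntegralNorm

variable {α E ι : Type*} [MeasurableSpace α] {μ : Measure α} [NormedAddCommGroup E] [Countable ι]
  {F : ι → α → E} {f : α → E}

theorem integrable_of_hasSum_of_summable_integral_norm (hF_int : ∀ i, Integrable (F i) μ)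
    (hF_sum : Summable fun i ↦ ∫ a, ‖F i a‖ ∂μ) (hf : ∀ᵐ a ∂μ, HasSum (F · a) (f a)) :
    Integrable f μ := by
  refine ⟨aestronglyMeasurable_of_tendsto_ae atTop
    (fun s ↦ Finset.aestronglyMeasurable_fun_sum s fun i _ ↦ (hF_int i).1) hf, ?_⟩
  have hle : ∀ᵐ a ∂μ, ‖f a‖ₑ ≤ ∑' i, ‖F i a‖ₑ := hf.mono fun a ha ↦ by
    rw [← ha.tsum_eq]
    exact enorm_tsum_le_tsum_enorm
  calc ∫⁻ a, ‖f a‖ₑ ∂μ ≤ ∫⁻ a, ∑' i, ‖F i a‖ₑ ∂μ := lintegral_mono_ae hle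
    _ = ∑' i, ENNReal.ofReal (∫ a, ‖F i a‖ ∂μ) := by
      rw [lintegral_tsum fun i ↦ (hF_int i).1.enorm]
      exact tsum_congr fun i ↦ (ofReal_integral_norm_eq_lintegral_enorm (hF_int i)).symm
    _ < ⊤ := by
      rw [← ENNReal.ofReal_tsum_of_nonneg (fun i ↦ integral_nonneg fun _ ↦ norm_nonneg _) hF_sum]
      exact ENNReal.ofReal_lt_top

theorem hasSum_integral_of_hasSum_of_summable_integral_norm [NormedSpace ℝ E]
    (hF_int : ∀ i, Integrable (F i) μ) (hF_sum : Summable fun i ↦ ∫ a, ‖F i a‖ ∂μ)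
    (hf : ∀ᵐ a ∂μ, HasSum (F · a) (f a)) :
    HasSum (fun i ↦ ∫ a, F i a ∂μ) (∫ a, f a ∂μ) := by
  rw [integral_congr_ae (hf.mono fun a ha ↦ ha.tsum_eq.symm)]
  exact hasSum_integral_of_summable_integral_norm hF_int hF_sum

end SummableIntegralNorm

theorem hasSum_one_div_nat_add_one_sq : HasSum (fun n : ℕ ↦ 1 / ((n : ℝ) + 1) ^ 2) (π ^ 2 / 6) := by
  simpa using (hasSum_nat_add_iff' 1).mpr hasSum_zeta_two

theorem integral_exp_neg_mul_Ioi_zero {b : ℝ} (hb : 0 < b) :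
    ∫ x in Ioi (0 : ℝ), exp (-b * x) = 1 / b := by
  rw [integral_exp_mul_Ioi (neg_neg_iff_pos.mpr hb)]
  simp [neg_div]

theorem hasSum_neg_log_one_sub_exp_neg_mul {a x : ℝ} (hax : 0 < a * x) :
    HasSum (fun n : ℕ ↦ exp (-((n + 1) * a) * x) / (n + 1)) (-log (1 - exp (-a * x))) := by
  have hlt : |exp (-a * x)| < 1 := by
    rw [abs_of_pos (exp_pos _), exp_lt_one_iff]
    linarith
  convert hasSum_pow_div_log_of_abs_lt_one hlt using 2 with n
  rw [← exp_nat_mul]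
  push_cast
  ring_nf

theorem integrableOn_exp_neg_mul_div {a : ℝ} (ha : 0 < a) (n : ℕ) :
    IntegrableOn (fun x ↦ exp (-((n + 1) * a) * x) / (n + 1)) (Ioi 0) :=
  (exp_neg_integrableOn_Ioi 0 (by positivity)).div_const _

theorem integral_exp_neg_mul_div {a : ℝ} (ha : 0 < a) (n : ℕ) :
    ∫ x in Ioi (0 : ℝ), exp (-((n + 1) * a) * x) / (n + 1) = 1 / ((n + 1) ^ 2 * a) := by
  rw [integral_div, integral_exp_neg_mul_Ioi_zero (by positivity)]
  field_simp

theorem hasSum_integral_exp_neg_mul_div {a : ℝ} (ha : 0 < a) :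
    HasSum (fun n : ℕ ↦ ∫ x in Ioi (0 : ℝ), exp (-((n + 1) * a) * x) / (n + 1))
      (π ^ 2 / (6 * a)) := by
  simp_rw [integral_exp_neg_mul_div ha, ← div_div]
  exact hasSum_one_div_nat_add_one_sq.div_const a

theorem summable_integral_norm_exp_neg_mul_div {a : ℝ} (ha : 0 < a) :
    Summable fun n : ℕ ↦ ∫ x in Ioi (0 : ℝ), ‖exp (-((n + 1) * a) * x) / (n + 1)‖ := by
  have hnorm (n : ℕ) (x : ℝ) :
      ‖exp (-((n + 1) * a) * x) / (n + 1)‖ = exp (-((n + 1) * a) * x) / (n + 1) :=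
    Real.norm_of_nonneg (by positivity)
  simp_rw [hnorm]
  exact (hasSum_integral_exp_neg_mul_div ha).summable

theorem ae_hasSum_neg_log_one_sub_exp_neg_mul {a : ℝ} (ha : 0 < a) :
    ∀ᵐ x ∂volume.restrict (Ioi 0),
      HasSum (fun n : ℕ ↦ exp (-((n + 1) * a) * x) / (n + 1)) (-log (1 - exp (-a * x))) :=
  ae_restrict_of_forall_mem measurableSet_Ioi fun _ hx ↦
    hasSum_neg_log_one_sub_exp_neg_mul (mul_pos ha hx)

theorem integrableOn_log_one_sub_exp_neg_mul {a : ℝ} (ha : 0 < a) :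
    IntegrableOn (fun x ↦ log (1 - exp (-a * x))) (Ioi 0) :=
  integrable_neg_iff.mp <| integrable_of_hasSum_of_summable_integral_norm
    (integrableOn_exp_neg_mul_div ha) (summable_integral_norm_exp_neg_mul_div ha)
    (ae_hasSum_neg_log_one_sub_exp_neg_mul ha)

theorem integral_log_one_sub_exp_neg_mul {a : ℝ} (ha : 0 < a) :
    ∫ x in Ioi (0 : ℝ), log (1 - exp (-a * x)) = -(π ^ 2 / (6 * a)) := by
  have h := hasSum_integral_of_hasSum_of_summable_integral_norm (integrableOn_exp_neg_mul_div ha)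
    (summable_integral_norm_exp_neg_mul_div ha) (ae_hasSum_neg_log_one_sub_exp_neg_mul ha)
  rw [integral_neg] at h
  rw [(hasSum_integral_exp_neg_mul_div ha).unique h, neg_neg]

theorem one_sub_one_div_cosh (x : ℝ) :
    1 - 1 / cosh x = (1 - exp (-x)) ^ 2 / (1 + exp (-x) ^ 2) := by
  have hx : exp x * exp (-x) = 1 := by rw [← exp_add, add_neg_cancel, exp_zero]
  rw [cosh_eq]
  field_simp
  linear_combination 2 * hx

theorem log_one_sub_one_div_cosh {x : ℝ} (hx : 0 < x) :
    log (1 - 1 / cosh x) =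
      2 * log (1 - exp (-1 * x)) + log (1 - exp (-2 * x)) - log (1 - exp (-4 * x)) := by
  set t := exp (-x)
  have ht : t < 1 := exp_lt_one_iff.mpr (neg_lt_zero.mpr hx)
  have ht2 : exp (-2 * x) = t ^ 2 := by rw [← exp_nat_mul]; ring_nf
  have ht4 : exp (-4 * x) = t ^ 4 := by rw [← exp_nat_mul]; ring_nf
  have h1 : 0 < 1 - t := by linarith
  have h2 : 0 < 1 - t ^ 2 := by nlinarith [exp_pos (-x)]
  rw [one_sub_one_div_cosh, neg_one_mul, ht2, ht4,
    show 1 - t ^ 4 = (1 - t ^ 2) * (1 + t ^ 2) by ring, log_div (by positivity) (by positivity),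
    log_mul h2.ne' (by positivity), log_pow]
  push_cast
  ring

theorem stmt_9 :
    (∫ x in Set.Ioi (0:ℝ), Real.log (1 - 1 / Real.cosh x))
      = -(3 * Real.pi ^ 2 / 8) := by
  have h1 := integrableOn_log_one_sub_exp_neg_mul one_pos
  have h2 := integrableOn_log_one_sub_exp_neg_mul two_pos
  have h4 := integrableOn_log_one_sub_exp_neg_mul four_pos
  have h12 : IntegrableOn (fun x ↦ 2 * log (1 - exp (-1 * x)) + log (1 - exp (-2 * x))) (Ioi 0) :=
    (h1.const_mul 2).add h2
  rw [setIntegral_congr_fun measurableSet_Ioi fun x hx ↦ log_one_sub_one_div_cosh hx,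
    integral_sub h12 h4, integral_add (h1.const_mul 2) h2,
    integral_const_mul, integral_log_one_sub_exp_neg_mul one_pos,
    integral_log_one_sub_exp_neg_mul two_pos, integral_log_one_sub_exp_neg_mul four_pos]
  ring
end

section
/- The integral ∫_0^∞ ln(1 - 1/cosh x) dx equals -(3/2) ∫_0^∞ x/sinh(x) dx. -/
/-!
Since `1 - 1 / cosh x = tanh x * tanh (x / 2)`, rescaling the second factor turns the left side
into `3 ∫ log (tanh x)`. Integrating by parts against `x`, with `(log ∘ tanh)' x = 2 / sinh (2x)`
and boundary term `x log (tanh x) → 0` at both ends, gives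
`∫ log (tanh x) = -∫ 2x / sinh (2x) = -(1/2) ∫ x / sinh x`.
-/

open Real MeasureTheory Set Filter Topology

namespace Real

theorem one_sub_inv_cosh_eq_tanh_mul_tanh_half (x : ℝ) :
    1 - 1 / cosh x = tanh x * tanh (x / 2) := by
  obtain ⟨y, rfl⟩ : ∃ y, x = 2 * y := ⟨x / 2, by ring⟩
  have hc := cosh_pos y
  have hc2 := cosh_pos (2 * y)
  rw [mul_div_cancel_left₀ y two_ne_zero, tanh_eq_sinh_div_cosh, tanh_eq_sinh_div_cosh,
    sinh_two_mul]
  field_simp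
  rw [cosh_two_mul, cosh_sq]
  ring

theorem hasDerivAt_tanh_s10 (x : ℝ) : HasDerivAt tanh (1 / cosh x ^ 2) x := by
  rw [show tanh = fun y => sinh y / cosh y from funext tanh_eq_sinh_div_cosh]
  refine ((hasDerivAt_sinh x).div (hasDerivAt_cosh x) (cosh_pos x).ne').congr_deriv ?_
  rw [← cosh_sq_sub_sinh_sq x]
  ring

theorem continuous_tanh : Continuous tanh :=
  continuous_iff_continuousAt.2 fun x => (hasDerivAt_tanh_s10 x).continuousAt

theorem hasDerivAt_log_tanh {x : ℝ} (hx : x ≠ 0) :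
    HasDerivAt (fun y => log (tanh y)) (2 / sinh (2 * x)) x := by
  have hs : sinh x ≠ 0 := sinh_ne_zero.2 hx
  have hc := (cosh_pos x).ne'
  have ht : tanh x ≠ 0 := by rw [tanh_eq_sinh_div_cosh]; exact div_ne_zero hs hc
  convert (hasDerivAt_tanh_s10 x).log ht using 1
  rw [tanh_eq_sinh_div_cosh, sinh_two_mul]
  field_simp

theorem tanh_pos {x : ℝ} (hx : 0 < x) : 0 < tanh x := by
  rw [tanh_eq_sinh_div_cosh]
  exact div_pos (sinh_pos_iff.2 hx) (cosh_pos x)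

theorem log_tanh_nonpos {x : ℝ} (hx : 0 < x) : log (tanh x) ≤ 0 :=
  log_nonpos (tanh_pos hx).le (tanh_lt_one x).le

theorem neg_log_tanh_le {x : ℝ} (hx : 0 < x) : -log (tanh x) ≤ exp (-x) / sinh x := by
  have hs := sinh_pos_iff.2 hx
  have h := one_sub_inv_le_log_of_pos (tanh_pos hx)
  rw [tanh_eq_sinh_div_cosh, inv_div] at h
  rw [tanh_eq_sinh_div_cosh]
  rw [← cosh_sub_sinh, sub_div, div_self hs.ne']
  linarith

theorem log_sub_sq_div_two_le_log_tanh {x : ℝ} (hx : 0 < x) :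
    log x - x ^ 2 / 2 ≤ log (tanh x) := by
  have hs := sinh_pos_iff.2 hx
  have hlog_sinh : log x ≤ log (sinh x) := log_le_log hx (self_le_sinh_iff.2 hx.le)
  have hlog_cosh : log (cosh x) ≤ x ^ 2 / 2 :=
    (log_le_iff_le_exp (cosh_pos x)).2 (cosh_le_exp_half_sq x)
  rw [tanh_eq_sinh_div_cosh, log_div hs.ne' (cosh_pos x).ne']
  linarith

theorem div_sinh_le_one {x : ℝ} (hx : 0 < x) : x / sinh x ≤ 1 :=
  (div_le_one (sinh_pos_iff.2 hx)).2 (self_le_sinh_iff.2 hx.le)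

theorem div_sinh_le {x : ℝ} (hx : 0 < x) : x / sinh x ≤ (1 + 2 * x) * exp (-x) := by
  have hs := sinh_pos_iff.2 hx
  have h2x : 1 + 2 * x ≤ exp (2 * x) := by linarith [add_one_le_exp (2 * x)]
  have hsinh : exp (-x) * sinh x * 2 = 1 - exp (-(2 * x)) := by
    have h1 : exp (-x) * exp x = 1 := by rw [← exp_add]; simp
    have h2 : exp (-(2 * x)) = exp (-x) * exp (-x) := by rw [← exp_add]; ring_nf
    rw [sinh_eq, h2]
    linear_combination h1
  have hdecay : (1 + 2 * x) * exp (-(2 * x)) ≤ 1 := by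
    have := mul_le_mul_of_nonneg_right h2x (exp_pos (-(2 * x))).le
    rwa [← exp_add, add_neg_cancel, exp_zero] at this
  rw [div_le_iff₀ hs]
  nlinarith

theorem integrableOn_div_sinh : IntegrableOn (fun x => x / sinh x) (Ioi 0) := by
  have hdom : IntegrableOn (fun x => (1 + 2 * x) * exp (-x)) (Ioi 0) := by
    have h1 := GammaIntegral_convergent one_pos
    have h2 := GammaIntegral_convergent two_pos
    norm_num at h1 h2
    exact (h1.add (h2.const_mul 2)).congr_fun (fun x _ => by simp only [Pi.add_apply]; ring) measurableSet_Ioi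
  refine hdom.mono' (measurable_id.div measurable_sinh).aestronglyMeasurable ((ae_restrict_iff' measurableSet_Ioi).2 (ae_of_all _ ?_))
  intro x (hx : 0 < x)
  rw [norm_of_nonneg (div_nonneg hx.le (sinh_pos_iff.2 hx).le)]
  exact div_sinh_le hx

theorem integrableOn_log_tanh : IntegrableOn (fun x => log (tanh x)) (Ioi 0) := by
  have hmeas : AEStronglyMeasurable (fun x => log (tanh x)) :=
    (measurable_log.comp continuous_tanh.measurable).aestronglyMeasurable
  rw [← Ioc_union_Ioi_eq_Ioi zero_le_one]
  refine IntegrableOn.union ?_ ?_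
  · have hdom : IntegrableOn (fun x => x ^ 2 / 2 - log x) (Ioc 0 1) :=
      ((continuous_pow 2).div_const 2 |>.intervalIntegrable 0 1).sub
        intervalIntegral.intervalIntegrable_log' |>.1
    refine hdom.mono' hmeas.restrict ((ae_restrict_iff' measurableSet_Ioc).2 (ae_of_all _ ?_))
    intro x hx
    rw [norm_of_nonpos (log_tanh_nonpos hx.1)]
    linarith [log_sub_sq_div_two_le_log_tanh hx.1]
  · refine (integrableOn_div_sinh.mono_set (Ioi_subset_Ioi zero_le_one)).mono' hmeas.restrict
      ((ae_restrict_iff' measurableSet_Ioi).2 (ae_of_all _ ?_))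
    intro x (hx : 1 < x)
    have hx0 : 0 < x := one_pos.trans hx
    rw [norm_of_nonpos (log_tanh_nonpos hx0)]
    calc -log (tanh x) ≤ exp (-x) / sinh x := neg_log_tanh_le hx0
      _ ≤ x / sinh x := by
        gcongr
        linarith [exp_le_one_iff.2 (neg_nonpos.2 hx0.le)]

theorem tendsto_mul_log_tanh_nhdsGT_zero :
    Tendsto (fun x => x * log (tanh x)) (𝓝[>] 0) (𝓝 0) := by
  have hlower : Tendsto (fun x => x * log x - x ^ 3 / 2) (𝓝[>] 0) (𝓝 0) := by
    have : Continuous (fun x => x * log x - x ^ 3 / 2) := by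
      have := continuous_mul_log
      fun_prop
    simpa using this.tendsto 0 |>.mono_left nhdsWithin_le_nhds
  refine tendsto_of_tendsto_of_tendsto_of_le_of_le' hlower tendsto_const_nhds ?_ ?_
  all_goals filter_upwards [self_mem_nhdsWithin] with x (hx : 0 < x)
  · nlinarith [log_sub_sq_div_two_le_log_tanh hx]
  · exact mul_nonpos_of_nonneg_of_nonpos hx.le (log_tanh_nonpos hx)

theorem tendsto_mul_log_tanh_atTop : Tendsto (fun x => x * log (tanh x)) atTop (𝓝 0) := by
  have hlower : Tendsto (fun x => -exp (-x)) atTop (𝓝 0) := by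
    simpa using tendsto_exp_neg_atTop_nhds_zero.neg
  refine tendsto_of_tendsto_of_tendsto_of_le_of_le' hlower tendsto_const_nhds ?_ ?_
  all_goals filter_upwards [eventually_gt_atTop 0] with x hx
  · have h : x * -log (tanh x) ≤ exp (-x) := calc
      x * -log (tanh x) ≤ x * (exp (-x) / sinh x) := by gcongr; exact neg_log_tanh_le hx
      _ = exp (-x) * (x / sinh x) := by ring
      _ ≤ exp (-x) := mul_le_of_le_one_right (exp_pos _).le (div_sinh_le_one hx)
    linarith
  · exact mul_nonpos_of_nonneg_of_nonpos hx.le (log_tanh_nonpos hx)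

theorem integral_log_tanh :
    ∫ x in Ioi 0, log (tanh x) = -(∫ x in Ioi 0, x / sinh x) / 2 := by
  have hscaled : IntegrableOn (fun x => 2 * x / sinh (2 * x)) (Ioi 0) :=
    (integrableOn_Ioi_comp_mul_left_iff (fun u => u / sinh u) 0 two_pos).2
      (by simpa using integrableOn_div_sinh)
  have hscaled_eq : ∫ x in Ioi 0, 2 * x / sinh (2 * x) = (∫ x in Ioi 0, x / sinh x) / 2 := by
    rw [integral_comp_mul_left_Ioi (fun u => u / sinh u) 0 two_pos, mul_zero, smul_eq_mul,
      inv_mul_eq_div]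
  have hcont : ContinuousWithinAt (fun x => x * log (tanh x)) (Ici 0) 0 := by
    rw [← continuousWithinAt_Ioi_iff_Ici, ContinuousWithinAt, zero_mul]
    exact tendsto_mul_log_tanh_nhdsGT_zero
  have hderiv : ∀ x ∈ Ioi (0 : ℝ), HasDerivAt (fun x => x * log (tanh x))
      (log (tanh x) + 2 * x / sinh (2 * x)) x := fun x (hx : 0 < x) =>
    ((hasDerivAt_id x).mul (hasDerivAt_log_tanh hx.ne')).congr_deriv (by simp only [id]; ring)
  have hibp := integral_Ioi_of_hasDerivAt_of_tendsto hcont hderiv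
    (integrableOn_log_tanh.add hscaled) tendsto_mul_log_tanh_atTop
  rw [integral_add integrableOn_log_tanh hscaled, hscaled_eq, zero_mul, sub_zero] at hibp
  linarith

end Real

theorem MeasureTheory.integral_Ioi_zero_comp_div {E : Type*} [NormedAddCommGroup E]
    [NormedSpace ℝ E] (f : ℝ → E) {c : ℝ} (hc : 0 < c) :
    ∫ x in Ioi 0, f (x / c) = c • ∫ x in Ioi 0, f x := by
  simp_rw [div_eq_inv_mul]
  rw [integral_comp_mul_left_Ioi f 0 (inv_pos.2 hc), mul_zero, inv_inv]

theorem stmt_10 :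
    (∫ x in Set.Ioi (0:ℝ), Real.log (1 - 1 / Real.cosh x))
      = -(3 / 2) * ∫ x in Set.Ioi (0:ℝ), x / Real.sinh x := by
  have hhalf : IntegrableOn (fun x => log (tanh (x / 2))) (Ioi 0) := by
    simp_rw [div_eq_inv_mul]
    exact (integrableOn_Ioi_comp_mul_left_iff _ 0 (inv_pos.2 two_pos)).2
      (by simpa using integrableOn_log_tanh)
  calc ∫ x in Ioi 0, log (1 - 1 / cosh x)
      = ∫ x in Ioi 0, (log (tanh x) + log (tanh (x / 2))) :=
        setIntegral_congr_fun measurableSet_Ioi fun x (hx : 0 < x) => by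
          rw [one_sub_inv_cosh_eq_tanh_mul_tanh_half,
            log_mul (tanh_pos hx).ne' (tanh_pos (half_pos hx)).ne']
    _ = 3 * ∫ x in Ioi 0, log (tanh x) := by
        rw [integral_add integrableOn_log_tanh hhalf,
          integral_Ioi_zero_comp_div (fun x => log (tanh x)) two_pos, smul_eq_mul]
        ring
    _ = -(3 / 2) * ∫ x in Ioi 0, x / sinh x := by
        rw [integral_log_tanh]
        ring
end

section
/- For every real β < 1 one has ∫_0^∞ ln(1 - β/cosh x) dx = (1/2)(arcosh(-β))² + π²/8, where for -β ∈ (-1,1) arcosh(-β) is interpreted as i·arccos(-β) so that (arcosh(-β))² = -(arccos(-β))². -/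
/-- The real inverse hyperbolic cosine, `arcosh x = log (x + √(x² - 1))` (for `x ≥ 1`). -/
noncomputable def arcosh (x : ℝ) : ℝ := Real.log (x + Real.sqrt (x ^ 2 - 1))

/-!
Writing `log (1 - β / cosh x) = -∫ s in 0..β, (cosh x - s)⁻¹` and exchanging the integrals
reduces the claim to `G t = ∫ x in Ioi 0, (cosh x - t)⁻¹`. After `u = exp x` the integrand is
rational, and `G t = arccos (-t) / √(1 - t²)` for `|t| < 1`, while
`G t = arcosh (-t) / √(t² - 1)` for `t < -1`. These are the derivatives of `arccos (-t)² / 2`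
and `-arcosh (-t)² / 2`, which both vanish at `t = -1`; so the fundamental theorem of calculus,
applied off the single point `-1`, gives the formula, with constant `arccos 0 ² / 2 = π² / 8`.
-/

lemma arcosh_eq_real_arcosh : arcosh = Real.arcosh := rfl

section

open Real Set Filter Topology MeasureTheory intervalIntegral
open scoped Interval

lemma log_one_sub_div_eq_neg_integral {c β : ℝ} (hc : 0 < c) (hβ : β < c) :
    log (1 - β / c) = -∫ s in (0 : ℝ)..β, (c - s)⁻¹ := by
  have h := integral_comp_sub_left (fun x : ℝ => x⁻¹) (a := 0) (b := β) c
  simp only [sub_zero] at h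
  rw [h, integral_inv_of_pos (sub_pos.2 hβ) hc, ← log_inv, inv_div, one_sub_div hc.ne']

lemma integral_intervalIntegral_swap {α E : Type*} [MeasurableSpace α] {μ : Measure α}
    [SFinite μ] [NormedAddCommGroup E] [NormedSpace ℝ E] {f : α → ℝ → E} {a b : ℝ}
    (hf : Integrable (Function.uncurry f) (μ.prod (volume.restrict (Ι a b)))) :
    ∫ x, (∫ s in a..b, f x s) ∂μ = ∫ s in a..b, ∫ x, f x s ∂μ := by
  simp_rw [intervalIntegral_eq_integral_uIoc, MeasureTheory.integral_smul,
    integral_integral_swap hf]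

lemma cosh_sub_pos {t : ℝ} (ht : t < 1) (x : ℝ) : 0 < cosh x - t :=
  sub_pos.2 (ht.trans_le (one_le_cosh x))

lemma inv_cosh_sub_eq (t x : ℝ) :
    (cosh x - t)⁻¹ = 2 * exp x / ((exp x - t) ^ 2 + (1 - t ^ 2)) := by
  rw [← inv_div, cosh_eq, exp_neg]
  field_simp
  ring

noncomputable def invCoshSubIntegral (t : ℝ) : ℝ := ∫ x in Ioi 0, (cosh x - t)⁻¹

lemma two_mul_arctan_sqrt_div_one_add {u : ℝ} (h₁ : -1 < u) (h₂ : u ≤ 1) :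
    2 * arctan (√(1 - u ^ 2) / (1 + u)) = arccos u := by
  set θ := arccos u
  have hθ₀ : 0 ≤ θ := arccos_nonneg u
  have hθπ : θ < π := arccos_lt_pi.2 h₁
  have hcos : 0 < cos (θ / 2) := cos_pos_of_mem_Ioo ⟨by linarith, by linarith⟩
  have hsin : √(1 - u ^ 2) = 2 * sin (θ / 2) * cos (θ / 2) := by
    rw [← sin_two_mul, mul_div_cancel₀ _ two_ne_zero, sin_arccos]
  have hcos_sq : 1 + u = 2 * cos (θ / 2) ^ 2 := by
    rw [cos_sq, mul_div_cancel₀ _ two_ne_zero, cos_arccos h₁.le h₂]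
    ring
  have htan : √(1 - u ^ 2) / (1 + u) = tan (θ / 2) := by
    rw [hsin, hcos_sq, tan_eq_sin_div_cos]
    field_simp
  rw [htan, arctan_tan (by linarith [pi_pos]) (by linarith)]
  ring

lemma hasDerivAt_arctan_exp_sub_div {t d : ℝ} (hd : 0 < d) (hd2 : d ^ 2 = 1 - t ^ 2) (x : ℝ) :
    HasDerivAt (fun y => 2 / d * arctan ((exp y - t) / d)) (cosh x - t)⁻¹ x := by
  have h := ((((hasDerivAt_exp x).sub_const t).div_const d).arctan).const_mul (2 / d)
  refine h.congr_deriv ?_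
  rw [inv_cosh_sub_eq, ← hd2]
  field_simp
  ring

lemma tendsto_arctan_exp_sub_div {t d : ℝ} (hd : 0 < d) :
    Tendsto (fun y => 2 / d * arctan ((exp y - t) / d)) atTop (𝓝 (π / d)) := by
  have h : Tendsto (fun y => (exp y - t) / d) atTop atTop :=
    (tendsto_atTop_add_const_right atTop (-t) tendsto_exp_atTop).atTop_div_const hd
  have := (tendsto_arctan_atTop.mono_right nhdsWithin_le_nhds).comp h |>.const_mul (2 / d)
  rwa [show π / d = 2 / d * (π / 2) by field_simp]

lemma integrableOn_inv_cosh_sub_of_mem_Ioo {t : ℝ} (h₁ : -1 < t) (h₂ : t < 1) :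
    IntegrableOn (fun x => (cosh x - t)⁻¹) (Ioi 0) := by
  have hd : 0 < √(1 - t ^ 2) := sqrt_pos.2 (by nlinarith)
  exact integrableOn_Ioi_deriv_of_nonneg'
    (fun x _ => hasDerivAt_arctan_exp_sub_div hd (sq_sqrt (by nlinarith)) x)
    (fun x _ => (inv_pos.2 (cosh_sub_pos h₂ x)).le) (tendsto_arctan_exp_sub_div hd)

lemma invCoshSubIntegral_of_mem_Ioo {t : ℝ} (h₁ : -1 < t) (h₂ : t < 1) :
    invCoshSubIntegral t = arccos (-t) / √(1 - t ^ 2) := by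
  have hd : 0 < √(1 - t ^ 2) := sqrt_pos.2 (by nlinarith)
  rw [invCoshSubIntegral, integral_Ioi_of_hasDerivAt_of_nonneg'
    (fun x _ => hasDerivAt_arctan_exp_sub_div hd (sq_sqrt (by nlinarith)) x)
    (fun x _ => (inv_pos.2 (cosh_sub_pos h₂ x)).le) (tendsto_arctan_exp_sub_div hd)]
  have h := two_mul_arctan_sqrt_div_one_add (u := -t) (by linarith) (by linarith)
  rw [neg_sq, ← sub_eq_add_neg, ← inv_div, arctan_inv_of_pos (div_pos (by linarith) hd)] at h
  rw [← h, exp_zero]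
  ring

lemma one_sub_mul_exp_neg_pos {a : ℝ} (ha : a < 0) (y : ℝ) : 0 < 1 - a * exp (-y) := by
  nlinarith [mul_neg_of_neg_of_pos ha (exp_pos (-y))]

lemma hasDerivAt_log_one_sub_mul_exp_neg {a : ℝ} (ha : a < 0) (x : ℝ) :
    HasDerivAt (fun y => log (1 - a * exp (-y))) (a * exp (-x) / (1 - a * exp (-x))) x := by
  have h := (((hasDerivAt_neg x).exp.const_mul a).const_sub 1).log
    (one_sub_mul_exp_neg_pos ha x).ne'
  refine h.congr_deriv ?_
  ring

-- Written with `exp (-y)` rather than `exp y` so that both logarithms tend to `log 1`.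
lemma hasDerivAt_log_sub_log_exp_neg {t d : ℝ} (hd : 0 < d) (hd2 : d ^ 2 = t ^ 2 - 1)
    (htd : t + d < 0) (x : ℝ) :
    HasDerivAt (fun y => 1 / d * (log (1 - (t + d) * exp (-y)) - log (1 - (t - d) * exp (-y))))
      (cosh x - t)⁻¹ x := by
  have h := ((hasDerivAt_log_one_sub_mul_exp_neg htd x).sub
    (hasDerivAt_log_one_sub_mul_exp_neg (by linarith : t - d < 0) x)).const_mul (1 / d)
  refine h.congr_deriv ?_
  have hx := exp_pos x
  have e₁ : exp x - (t + d) ≠ 0 := by linarith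
  have e₂ : exp x - (t - d) ≠ 0 := by linarith
  have hden : (exp x - t) ^ 2 + (1 - t ^ 2) = (exp x - (t + d)) * (exp x - (t - d)) := by
    linear_combination hd2
  rw [exp_neg, inv_cosh_sub_eq, hden]
  field_simp
  ring

lemma tendsto_log_sub_log_exp_neg (t d : ℝ) :
    Tendsto (fun y => 1 / d * (log (1 - (t + d) * exp (-y)) - log (1 - (t - d) * exp (-y))))
      atTop (𝓝 0) := by
  have h : ∀ a : ℝ, Tendsto (fun y => log (1 - a * exp (-y))) atTop (𝓝 0) := fun a => by
    simpa using ((tendsto_exp_neg_atTop_nhds_zero.const_mul a).const_sub 1).log (by simp)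
  simpa using ((h (t + d)).sub (h (t - d))).const_mul (1 / d)

lemma invCoshSubIntegral_of_lt_neg_one {t : ℝ} (ht : t < -1) :
    invCoshSubIntegral t = Real.arcosh (-t) / √(t ^ 2 - 1) := by
  set d := √(t ^ 2 - 1) with hd_def
  have hd : 0 < d := sqrt_pos.2 (by nlinarith)
  have hd2 : d ^ 2 = t ^ 2 - 1 := sq_sqrt (by nlinarith)
  have htd : t + d < 0 := by nlinarith
  rw [invCoshSubIntegral,
    integral_Ioi_of_hasDerivAt_of_nonneg' (fun x _ => hasDerivAt_log_sub_log_exp_neg hd hd2 htd x)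
    (fun x _ => (inv_pos.2 (cosh_sub_pos (by linarith) x)).le) (tendsto_log_sub_log_exp_neg t d),
    Real.arcosh, neg_sq, ← hd_def, neg_zero, exp_zero, mul_one, mul_one,
    ← log_div (by linarith) (by linarith)]
  have h : (1 - (t + d)) / (1 - (t - d)) = (-t + d)⁻¹ := by
    have h₁ : 1 - (t - d) ≠ 0 := by linarith
    have h₂ : -t + d ≠ 0 := by linarith
    field_simp
    linear_combination -hd2
  rw [h, log_inv]
  ring

lemma integrable_inv_cosh_sub_prod {a b : ℝ} (hb : b < 1) :
    Integrable (fun p : ℝ × ℝ => (cosh p.1 - p.2)⁻¹)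
      ((volume.restrict (Ioi 0)).prod (volume.restrict (Ioc a b))) := by
  set c := max b 0
  have hc : c < 1 := max_lt hb one_pos
  have hbound : Integrable (fun p : ℝ × ℝ => (cosh p.1 - c)⁻¹ * 1)
      ((volume.restrict (Ioi 0)).prod (volume.restrict (Ioc a b))) :=
    (integrableOn_inv_cosh_sub_of_mem_Ioo (by linarith [le_max_right b 0]) hc).mul_prod
      (integrableOn_const measure_Ioc_lt_top.ne)
  refine hbound.mono' (by fun_prop) ?_
  rw [Measure.prod_restrict, ae_restrict_iff' (measurableSet_Ioi.prod measurableSet_Ioc)]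
  filter_upwards with p hp
  obtain ⟨-, -, hs⟩ := hp
  have hsc : p.2 ≤ c := hs.trans (le_max_left b 0)
  rw [mul_one, norm_inv, norm_of_nonneg (cosh_sub_pos (hsc.trans_lt hc) p.1).le]
  exact inv_anti₀ (cosh_sub_pos hc p.1) (by linarith)

lemma intervalIntegrable_invCoshSubIntegral {β : ℝ} (hβ : β < 1) :
    IntervalIntegrable invCoshSubIntegral volume 0 β :=
  intervalIntegrable_iff.2 (integrable_inv_cosh_sub_prod (max_lt one_pos hβ)).integral_prod_right

lemma integral_log_one_sub_div_cosh {β : ℝ} (hβ : β < 1) :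
    ∫ x in Ioi 0, log (1 - β / cosh x) = -∫ t in (0 : ℝ)..β, invCoshSubIntegral t := by
  have h (x : ℝ) : log (1 - β / cosh x) = -∫ s in (0 : ℝ)..β, (cosh x - s)⁻¹ :=
    log_one_sub_div_eq_neg_integral (cosh_pos x) (hβ.trans_le (one_le_cosh x))
  simp_rw [h]
  rw [MeasureTheory.integral_neg,
    integral_intervalIntegral_swap (integrable_inv_cosh_sub_prod (max_lt one_pos hβ))]
  rfl

noncomputable def invCoshSubIntegralPrimitive (t : ℝ) : ℝ :=
  if t ≤ -1 then -(1 / 2 * Real.arcosh (-t) ^ 2) else 1 / 2 * arccos (-t) ^ 2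

lemma continuous_invCoshSubIntegralPrimitive : Continuous invCoshSubIntegralPrimitive := by
  have harcosh : ContinuousOn (fun t => Real.arcosh (-t)) {t | t ≤ -1} :=
    continuousOn_arcosh.comp continuous_neg.continuousOn fun t (ht : t ≤ -1) =>
      show 1 ≤ -t by linarith
  refine continuous_if_le continuous_id continuous_const
    (continuousOn_const.mul (harcosh.pow 2)).neg (by fun_prop) ?_
  rintro t (rfl : t = -1)
  simp [arccos_one]

lemma hasDerivAt_invCoshSubIntegralPrimitive {t : ℝ} (ht : t ≠ -1) (ht₁ : t < 1) :
    HasDerivAt invCoshSubIntegralPrimitive (invCoshSubIntegral t) t := by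
  rcases ht.lt_or_gt with ht | ht
  · rw [invCoshSubIntegral_of_lt_neg_one ht]
    have h := ((((hasDerivAt_arcosh (show -t ∈ Ioi 1 from lt_neg_of_lt_neg ht)).comp t
      (hasDerivAt_neg t)).pow 2).const_mul (1 / 2)).neg
    refine (h.congr_deriv ?_).congr_of_eventuallyEq ?_
    · simp only [Function.comp_apply, neg_sq]
      ring
    · filter_upwards [Iic_mem_nhds ht] with s (hs : s ≤ -1)
      simp [invCoshSubIntegralPrimitive, hs]
  · rw [invCoshSubIntegral_of_mem_Ioo ht ht₁]
    have h := (((hasDerivAt_arccos (x := -t) (by linarith) (by linarith)).comp t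
      (hasDerivAt_neg t)).pow 2).const_mul (1 / 2)
    refine (h.congr_deriv ?_).congr_of_eventuallyEq ?_
    · simp only [Function.comp_apply, neg_sq]
      ring
    · filter_upwards [Ioi_mem_nhds ht] with s (hs : -1 < s)
      simp [invCoshSubIntegralPrimitive, not_le.2 hs]

lemma invCoshSubIntegralPrimitive_zero : invCoshSubIntegralPrimitive 0 = π ^ 2 / 8 := by
  norm_num [invCoshSubIntegralPrimitive]
  ring

lemma intervalIntegral_invCoshSubIntegral {β : ℝ} (hβ : β < 1) :
    ∫ t in (0 : ℝ)..β, invCoshSubIntegral t =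
      invCoshSubIntegralPrimitive β - invCoshSubIntegralPrimitive 0 :=
  integral_eq_of_hasDerivAt_off_countable _ _ (countable_singleton (-1))
    continuous_invCoshSubIntegralPrimitive.continuousOn
    (fun _ ht => hasDerivAt_invCoshSubIntegralPrimitive ht.2
      (ht.1.2.trans_le (max_lt one_pos hβ).le))
    (intervalIntegrable_invCoshSubIntegral hβ)

end

theorem stmt_12 (β : ℝ) (hβ : β < 1) :
    (∫ x in Set.Ioi (0:ℝ), Real.log (1 - β / Real.cosh x))
      = (if β ≤ -1 then (1 / 2) * arcosh (-β) ^ 2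
          else -((1 / 2) * Real.arccos (-β) ^ 2)) + Real.pi ^ 2 / 8 := by
  rw [integral_log_one_sub_div_cosh hβ, intervalIntegral_invCoshSubIntegral hβ,
    invCoshSubIntegralPrimitive_zero, invCoshSubIntegralPrimitive, arcosh_eq_real_arcosh]
  split_ifs <;> ring
end

section
/- Let h_j = 1/(j+1) if j is even and h_j = 0 if j is odd, and let H_- = (h_{j+k})_{j,k≥0} restricted to indices 0,…,2N-1. Then for all m, N ∈ ℕ with m,N ≥ 1 and α ≥ 1/2, tr[(H_{N,α})^m] ≤ 2^m tr[(P_{2N} H_-)^m], where H_{N,α} = (1/(j+k+α))_{j,k=0,…,N-1}. Formulated concretely: ∑_{k_1,…,k_m=0}^{N-1} ∏_{l=1}^{m} 1/(k_l + k_{l+1} + α) ≤ 2^m ∑_{j_1,…,j_m=0}^{2N-1} ∏_{l=1}^{m} h_{j_l + j_{l+1}} (indices cyclic, k_{m+1} = k_1, j_{m+1} = j_1). -/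
theorem stmt_15 (α : ℝ) (hα : 1 / 2 ≤ α) (m N : ℕ) [NeZero m] (hN : 0 < N) :
    (∑ k : Fin m → Fin N, ∏ l : Fin m,
        (1 : ℝ) / ((k l : ℕ) + (k (l + 1) : ℕ) + α))
      ≤ 2 ^ m * ∑ j : Fin m → Fin (2 * N), ∏ l : Fin m,
          (if Even ((j l : ℕ) + (j (l + 1) : ℕ))
            then (1 : ℝ) / (((j l : ℕ) + (j (l + 1) : ℕ) : ℕ) + 1)
            else 0) := by
  set f : (Fin m → Fin (2 * N)) → ℝ := fun j => ∏ l : Fin m,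
      (if Even ((j l : ℕ) + (j (l + 1) : ℕ))
        then (1 : ℝ) / (((j l : ℕ) + (j (l + 1) : ℕ) : ℕ) + 1)
        else 0) with hf
  set e : (Fin m → Fin N) → (Fin m → Fin (2 * N)) :=
    fun k l => ⟨2 * (k l : ℕ), by have := (k l).isLt; omega⟩ with he
  have hinj : Function.Injective e := by
    intro a b hab
    funext l
    have := congrFun hab l
    simp only [e, Fin.mk.injEq] at this
    exact Fin.ext (by omega)
  have hf_nonneg : ∀ j : Fin m → Fin (2 * N), 0 ≤ f j := by
    intro j
    apply Finset.prod_nonneg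
    intro l _
    split <;> positivity
  have step1 : ∀ k : Fin m → Fin N,
      (∏ l : Fin m, (1 : ℝ) / ((k l : ℕ) + (k (l + 1) : ℕ) + α))
        ≤ 2 ^ m * f (e k) := by
    intro k
    have hval : ∀ l : Fin m,
        (if Even ((e k l : ℕ) + (e k (l + 1) : ℕ))
          then (1 : ℝ) / (((e k l : ℕ) + (e k (l + 1) : ℕ) : ℕ) + 1)
          else 0) = (1 : ℝ) / (2 * (k l : ℕ) + 2 * (k (l + 1) : ℕ) + 1) := by
      intro l
      have hev : Even ((e k l : ℕ) + (e k (l + 1) : ℕ)) :=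
        ⟨(k l : ℕ) + (k (l + 1) : ℕ), by simp [e]; ring⟩
      rw [if_pos hev]
      simp only [e]
      push_cast
      ring_nf
    simp only [hf, hval]
    rw [show (2 : ℝ) ^ m = ∏ _l : Fin m, (2 : ℝ) by simp, ← Finset.prod_mul_distrib]
    apply Finset.prod_le_prod
    · intro l _
      have : (0 : ℝ) < (k l : ℕ) + (k (l + 1) : ℕ) + α := by positivity
      positivity
    · intro l _
      have h1 : (1 : ℝ) / ((k l : ℕ) + (k (l + 1) : ℕ) + α)
          ≤ 1 / ((k l : ℕ) + (k (l + 1) : ℕ) + 1 / 2) := by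
        apply one_div_le_one_div_of_le
        · positivity
        · linarith
      have h2 : (1 : ℝ) / ((k l : ℕ) + (k (l + 1) : ℕ) + 1 / 2)
          = 2 * (1 / (2 * (k l : ℕ) + 2 * (k (l + 1) : ℕ) + 1)) := by
        rw [mul_one_div, div_eq_div_iff (by positivity) (by positivity)]
        ring
      linarith [h1, h2]
  calc (∑ k : Fin m → Fin N, ∏ l : Fin m,
          (1 : ℝ) / ((k l : ℕ) + (k (l + 1) : ℕ) + α))
      ≤ ∑ k : Fin m → Fin N, 2 ^ m * f (e k) :=
        Finset.sum_le_sum fun k _ => step1 k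
    _ = 2 ^ m * ∑ k : Fin m → Fin N, f (e k) := by rw [← Finset.mul_sum]
    _ = 2 ^ m * ∑ j ∈ Finset.univ.image e, f j := by
        rw [Finset.sum_image (fun a _ b _ h => hinj h)]
    _ ≤ 2 ^ m * ∑ j : Fin m → Fin (2 * N), f j := by
        apply mul_le_mul_of_nonneg_left _ (by positivity)
        exact Finset.sum_le_sum_of_subset_of_nonneg (Finset.subset_univ _)
          fun j _ _ => hf_nonneg j
end

section
/- For all real y > 0 and all δ with 0 ≤ δ ≤ 1/3, y/sinh(y) ≤ 2^δ e^{-δy}. -/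
/-!
Since `sinh (3y) - 3 sinh y = 4 sinh³ y`, Lazarevic's inequality `y³ cosh y ≤ sinh³ y` compares two
power series with nonnegative terms, and it holds termwise because `4 (2n+3)(2n+2)(2n+1) + 3 ≤ 3^(2n+3)`.
Together with `2 cosh y ≥ eʸ` it gives `(y / sinh y)³ ≤ 2e^{-y}`, and also `y / sinh y ≤ 1`; for
`δ ≤ 1/3` these two bounds interpolate to `y / sinh y ≤ (2e^{-y})^δ = 2^δ e^{-δy}`.
-/

open Real Nat

lemma four_mul_cubic_add_three_le_three_pow (n : ℕ) :
    4 * ((2 * n + 3) * (2 * n + 2) * (2 * n + 1)) + 3 ≤ 3 ^ (2 * n + 3) := by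
  induction n with
  | zero => norm_num
  | succ n ih =>
    calc 4 * ((2 * (n + 1) + 3) * (2 * (n + 1) + 2) * (2 * (n + 1) + 1)) + 3
        ≤ 9 * (4 * ((2 * n + 3) * (2 * n + 2) * (2 * n + 1)) + 3) := by ring_nf; nlinarith
      _ ≤ 3 ^ (2 * (n + 1) + 3) := by
        rw [show 2 * (n + 1) + 3 = 2 + (2 * n + 3) by ring, pow_add]
        omega

lemma four_mul_pow_div_factorial_le (n : ℕ) {y : ℝ} (hy : 0 ≤ y) :
    4 * (y ^ (2 * n + 3) / (2 * n)!) ≤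
      (3 ^ (2 * n + 3) - 3) * (y ^ (2 * n + 3) / (2 * n + 3)!) := by
  have hfac : ((2 * n + 3)! : ℝ) = (2 * n + 3) * (2 * n + 2) * (2 * n + 1) * (2 * n)! := by
    rw [show 2 * n + 3 = 2 * n + 2 + 1 by ring, factorial_succ, factorial_succ, factorial_succ]
    push_cast
    ring
  have hcoeff : 0 ≤ (3 : ℝ) ^ (2 * n + 3) - 3 - 4 * ((2 * n + 3) * (2 * n + 2) * (2 * n + 1)) := by
    have := four_mul_cubic_add_three_le_three_pow n
    rw [sub_sub, sub_nonneg, add_comm 3]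
    exact_mod_cast this
  have key := mul_nonneg hcoeff
    (mul_nonneg (pow_nonneg hy (2 * n + 3)) (cast_nonneg (α := ℝ) (2 * n)!))
  rw [hfac, mul_div_assoc', mul_div_assoc', div_le_div_iff₀ (by positivity) (by positivity)]
  linarith

lemma hasSum_sinh_three_mul_sub (y : ℝ) :
    HasSum (fun n ↦ (3 ^ (2 * n + 3) - 3) * (y ^ (2 * n + 3) / (2 * n + 3)!))
      (sinh (3 * y) - 3 * sinh y) := by
  have hterm (n : ℕ) :
      (3 * y) ^ (2 * n + 1) / (2 * n + 1)! - 3 * (y ^ (2 * n + 1) / (2 * n + 1)!) =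
        (3 ^ (2 * n + 1) - 3) * (y ^ (2 * n + 1) / (2 * n + 1)!) := by
    ring
  have h := (hasSum_sinh (3 * y)).sub ((hasSum_sinh y).mul_left 3)
  simp only [hterm] at h
  -- the `n = 0` term is `3y - 3y = 0`, so dropping it shifts the series to start at `y³`
  simpa [mul_add, add_assoc] using (hasSum_nat_add_iff' 1).mpr h

theorem pow_three_mul_cosh_le_sinh_pow_three {y : ℝ} (hy : 0 ≤ y) :
    y ^ 3 * cosh y ≤ sinh y ^ 3 := by
  have hcosh := (hasSum_cosh y).mul_left (4 * y ^ 3)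
  have hle := hasSum_le (fun n ↦ ?_) hcosh (hasSum_sinh_three_mul_sub y)
  · rw [sinh_three_mul] at hle
    linarith
  · rw [show 4 * y ^ 3 * (y ^ (2 * n) / (2 * n)!) = 4 * (y ^ (2 * n + 3) / (2 * n)!) by ring]
    exact four_mul_pow_div_factorial_le n hy

lemma inv_cosh_le_two_mul_exp_neg (y : ℝ) : (cosh y)⁻¹ ≤ 2 * exp (-y) := by
  rw [exp_neg, ← div_eq_mul_inv, inv_le_comm₀ (cosh_pos y) (by positivity), inv_div, cosh_eq]
  linarith [exp_pos (-y)]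

lemma div_sinh_pow_three_le_two_mul_exp_neg {y : ℝ} (hy : 0 < y) :
    (y / sinh y) ^ 3 ≤ 2 * exp (-y) := by
  have hsinh : 0 < sinh y ^ 3 := pow_pos (sinh_pos_iff.mpr hy) 3
  calc (y / sinh y) ^ 3 ≤ (cosh y)⁻¹ := by
        rw [div_pow, div_le_iff₀ hsinh, ← div_eq_inv_mul, le_div_iff₀ (cosh_pos y)]
        exact pow_three_mul_cosh_le_sinh_pow_three hy.le
    _ ≤ 2 * exp (-y) := inv_cosh_le_two_mul_exp_neg y

lemma le_rpow_of_le_rpow_of_le_one {r a θ δ : ℝ} (hr1 : r ≤ 1) (ha : 0 ≤ a) (hra : r ≤ a ^ θ)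
    (hδ0 : 0 ≤ δ) (hδθ : δ ≤ θ) : r ≤ a ^ δ := by
  rcases le_or_gt a 1 with ha1 | ha1
  · exact hra.trans (rpow_le_rpow_of_exponent_ge' ha ha1 hδ0 hδθ)
  · exact hr1.trans (one_le_rpow ha1.le hδ0)

theorem stmt_16 (y δ : ℝ) (hy : 0 < y) (hδ0 : 0 ≤ δ) (hδ1 : δ ≤ 1 / 3) :
    y / Real.sinh y ≤ 2 ^ δ * Real.exp (-δ * y) := by
  have hsinh : 0 < sinh y := sinh_pos_iff.mpr hy
  have hratio : 0 ≤ y / sinh y := div_nonneg hy.le hsinh.le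
  have hle_one : y / sinh y ≤ 1 := (div_le_one hsinh).mpr (self_le_sinh_iff.mpr hy.le)
  have hcube : y / sinh y ≤ (2 * exp (-y)) ^ (1 / 3 : ℝ) := by
    rw [one_div, le_rpow_inv_iff_of_pos hratio (by positivity) three_pos]
    exact_mod_cast div_sinh_pow_three_le_two_mul_exp_neg hy
  have hexp : 2 ^ δ * exp (-δ * y) = (2 * exp (-y)) ^ δ := by
    rw [mul_rpow zero_le_two (exp_pos _).le, ← exp_mul]
    ring_nf
  rw [hexp]
  exact le_rpow_of_le_rpow_of_le_one hle_one (by positivity) hcube hδ0 hδ1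
end
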